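/- Let g, f : ℝⁿ → ℝ be convex functions and suppose Φ = g − f attains a (global) minimum at x̃. Then ∂g(x̃) ∩ ∂f(x̃) ≠ ∅, where ∂ denotes the convex subdifferential. -/

import Mathlib

/-!
A minimiser `x̃` of `g - f` satisfies `g v - g x̃ ≥ f v - f x̃` for all `v`, so every
subgradient of `f` at `x̃` is also one of `g`. It remains to see that a finite convex function
on `ℝⁿ` has a subgradient at every point: it is continuous, so its strict epigraph is an open
convex set not containing `(x̃, f x̃)`, and a Hahn–Banach functional separating the two is,
after normalisation, the graph of an affine minorant of `f` touching it at `x̃`.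
-/

open Set Filter Topology RealInnerProductSpace

namespace ConvexOn

variable {E : Type*} [AddCommGroup E] [TopologicalSpace E] [IsTopologicalAddGroup E]
  [Module ℝ E] [ContinuousSMul ℝ E] {f : E → ℝ}

lemma exists_supporting_hyperplane_epigraph (hf : ConvexOn ℝ univ f) (hcont : Continuous f)
    (x : E) : ∃ φ : StrongDual ℝ E, ∃ c > 0, ∀ y, φ x + c * f x ≤ φ y + c * f y := by
  have hopen : IsOpen {p : E × ℝ | f p.1 < p.2} :=
    isOpen_lt (hcont.comp continuous_fst) continuous_snd
  have hconv : Convex ℝ {p : E × ℝ | f p.1 < p.2} := by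
    simpa using hf.convex_strict_epigraph
  obtain ⟨L, hL⟩ :=
    geometric_hahn_banach_point_open hconv hopen (x := (x, f x)) (lt_irrefl (f x))
  have hL_apply : ∀ y t, L (y, t) = L (y, 0) + t * L (0, 1) := fun y t => by
    rw [show (y, t) = (y, 0) + t • ((0 : E), (1 : ℝ)) by simp, map_add, map_smul, smul_eq_mul]
  refine ⟨L.comp (ContinuousLinearMap.inl ℝ E ℝ), L (0, 1), ?_, fun y => ?_⟩
  · have := hL (x, f x + 1) (lt_add_one (f x))
    rw [hL_apply x (f x), hL_apply x (f x + 1)] at this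
    linarith
  · have hlim : Tendsto (fun t => L (y, t)) (𝓝[>] (f y)) (𝓝 (L (y, f y))) :=
      ((L.continuous.comp (Continuous.prodMk_right y)).tendsto (f y)).mono_left
        nhdsWithin_le_nhds
    have := ge_of_tendsto hlim (eventually_nhdsWithin_of_forall fun t ht => (hL (y, t) ht).le)
    rw [hL_apply x (f x), hL_apply y (f y)] at this
    simpa [mul_comm] using this

theorem exists_subgradient (hf : ConvexOn ℝ univ f) (hcont : Continuous f) (x : E) :
    ∃ φ : StrongDual ℝ E, ∀ y, φ (y - x) + f x ≤ f y := by
  obtain ⟨φ, c, hc, hφ⟩ := hf.exists_supporting_hyperplane_epigraph hcont x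
  refine ⟨-c⁻¹ • φ, fun y => ?_⟩
  have := hφ y
  simp only [smul_apply, map_sub, smul_eq_mul]
  field_simp
  linarith

end ConvexOn

theorem ConvexOn.exists_inner_subgradient {E : Type*} [NormedAddCommGroup E]
    [InnerProductSpace ℝ E] [FiniteDimensional ℝ E] {f : E → ℝ} (hf : ConvexOn ℝ univ f)
    (x : E) : ∃ u : E, ∀ v, ⟪u, v - x⟫ + f x ≤ f v := by
  obtain ⟨φ, hφ⟩ := hf.exists_subgradient hf.locallyLipschitz.continuous x
  exact ⟨(InnerProductSpace.toDual ℝ E).symm φ,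
    by simpa only [InnerProductSpace.toDual_symm_apply] using hφ⟩

theorem stmt_2 {n : ℕ} (g f : EuclideanSpace ℝ (Fin n) → ℝ)
    (hf : ConvexOn ℝ Set.univ f)
    (xt : EuclideanSpace ℝ (Fin n))
    (hmin : ∀ x, g xt - f xt ≤ g x - f x) :
    ∃ u : EuclideanSpace ℝ (Fin n),
      (∀ v, ⟪u, v - xt⟫ + g xt ≤ g v) ∧ (∀ v, ⟪u, v - xt⟫ + f xt ≤ f v) := by
  obtain ⟨u, hu⟩ := hf.exists_inner_subgradient xt
  exact ⟨u, fun v => by linarith [hmin v, hu v], hu⟩
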